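/- Let F be a finite field with q elements and let k, s, t, d be integers with 1 ≤ k ≤ s ≤ t and 0 ≤ d ≤ s + t. Fix a tuple V⃗ = (a_k, …, a_{t−1}) ∈ F^{t−k}. Then the set of tuples (b_k, …, b_{s−1}) ∈ F^{s−k} for which there exist feature sets A, B ⊆ F with |A| = t, |B| = s, |A △ B| = d (symmetric difference of size d), the coefficient of X^j in χ_A equal to a_j for k ≤ j ≤ t−1, and the coefficient of X^j in χ_B equal to b_j for k ≤ j ≤ s−1, has cardinality at most q^d. -/

import Mathlib

/-!
Write `p = χ_{A∖B}` and `r = χ_{B∖A}`; their degrees are `m = (d + t - s) / 2` and `d - m ≤ m`.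
Since `χ_B p = χ_A r`, two witnesses `(A, B)` sharing the record of `A` and the pair `(p, r)`
satisfy `(χ_B - χ_B') p = (χ_A - χ_A') r` with `deg (χ_A - χ_A') < k`, so `deg (χ_B - χ_B') < k`:
the record of `B` is a function of `(p, r)`. Monic polynomials of degrees `m` and `d - m` are
given by `q ^ m * q ^ (d - m) = q ^ d` choices of lower coefficients.
-/

open Polynomial Finset

/-- The characteristic polynomial of a finite subset `A` of a field:
`χ_A(X) = ∏_{a ∈ A} (X - a)`. -/
noncomputable def charPoly {F : Type*} [Field F] (A : Finset F) : F[X] :=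
  ∏ a ∈ A, (X - C a)

section Cardinalities

variable {α : Type*} [DecidableEq α] (A B : Finset α)

lemma card_symmDiff : #(symmDiff A B) = #(A \ B) + #(B \ A) := by
  rw [symmDiff_def, sup_eq_union, card_union_of_disjoint disjoint_sdiff_sdiff]

lemma card_sdiff_eq_div_two : #(A \ B) = (#(symmDiff A B) + #A - #B) / 2 := by
  have hA := card_inter_add_card_sdiff A B
  have hB := card_inter_add_card_sdiff B A
  rw [inter_comm] at hB
  have := card_symmDiff A B
  omega

end Cardinalities

lemma Set.ncard_image_le_card_of_factor {α β γ : Type*} [Nonempty α] [Fintype γ] {W : Set α}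
    (f : α → β) (g : α → γ) (h : ∀ x ∈ W, ∀ y ∈ W, g x = g y → f x = f y) :
    (f '' W).ncard ≤ Fintype.card γ := by
  have hinj : Set.InjOn (g ∘ Function.invFunOn f W) (f '' W) := by
    rintro _ ⟨x, hx, rfl⟩ _ ⟨y, hy, rfl⟩ hxy
    have hx' : f x ∈ f '' W := ⟨x, hx, rfl⟩
    have hy' : f y ∈ f '' W := ⟨y, hy, rfl⟩
    have := h _ (Function.invFunOn_mem hx') _ (Function.invFunOn_mem hy') hxy
    rwa [Function.invFunOn_eq hx', Function.invFunOn_eq hy'] at this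
  calc (f '' W).ncard ≤ (Set.univ : Set γ).ncard :=
        Set.ncard_le_ncard_of_injOn _ (fun _ _ => Set.mem_univ _) hinj Set.finite_univ
    _ = Fintype.card γ := by rw [Set.ncard_univ, Nat.card_eq_fintype_card]

section Polynomials

variable {F : Type*} [Field F]

def lowCoeffs (n : ℕ) (p : F[X]) : Fin n → F := fun i => p.coeff i

/-- For `p = χ_B` and `n = #B` this is the vault record `rec_k(B)`. -/
def highCoeffs (k n : ℕ) (p : F[X]) : Fin (n - k) → F := fun j => p.coeff (k + j)

lemma highCoeffs_eq_of_degree_sub_lt {p q : F[X]} {k : ℕ} (n : ℕ) (h : (p - q).degree < k) :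
    highCoeffs k n p = highCoeffs k n q := by
  funext j
  have := (degree_lt_iff_coeff_zero _ _).mp h (k + j) (Nat.le_add_right k j)
  rwa [coeff_sub, sub_eq_zero] at this

lemma Polynomial.Monic.eq_of_lowCoeffs_eq {p q : F[X]} {n : ℕ} (hp : p.Monic) (hq : q.Monic)
    (hpn : p.natDegree = n) (hqn : q.natDegree = n) (h : lowCoeffs n p = lowCoeffs n q) :
    p = q := by
  rw [hp.as_sum, hq.as_sum, hpn, hqn]
  congr 1
  exact sum_congr rfl fun i hi => by
    rw [show p.coeff i = q.coeff i from congrFun h ⟨i, mem_range.mp hi⟩]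

lemma degree_lt_of_mul_eq_mul {P Q p r : F[X]} {k : ℕ} (hp : p ≠ 0)
    (hrp : r.natDegree ≤ p.natDegree) (h : P * p = Q * r) (hQ : Q.degree < k) :
    P.degree < k := by
  rcases eq_or_ne P 0 with rfl | hP
  · simp
  have hQ0 : Q ≠ 0 := by rintro rfl; simp_all
  have hr0 : r ≠ 0 := by rintro rfl; simp_all
  have hQk := (natDegree_lt_iff_degree_lt hQ0).mpr hQ
  have hdeg : P.natDegree + p.natDegree = Q.natDegree + r.natDegree := by
    rw [← natDegree_mul hP hp, ← natDegree_mul hQ0 hr0, h]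
  exact (natDegree_lt_iff_degree_lt hP).mp (by omega)

end Polynomials

section CharPoly

variable {F : Type*} [Field F]

lemma charPoly_monic (A : Finset F) : (charPoly A).Monic :=
  monic_prod_of_monic _ _ fun a _ => monic_X_sub_C a

lemma natDegree_charPoly (A : Finset F) : (charPoly A).natDegree = #A := by
  rw [charPoly, natDegree_prod _ _ fun a _ => X_sub_C_ne_zero a]
  simp

lemma coeff_charPoly_of_card_le (A : Finset F) {i : ℕ} (hi : #A ≤ i) :
    (charPoly A).coeff i = if i = #A then 1 else 0 := by
  split_ifs with h
  · rw [h, ← natDegree_charPoly, (charPoly_monic A).coeff_natDegree]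
  · exact coeff_eq_zero_of_natDegree_lt (by rw [natDegree_charPoly]; omega)

lemma charPoly_eq_of_lowCoeffs_eq {A B : Finset F} {n : ℕ} (hA : #A = n) (hB : #B = n)
    (h : lowCoeffs n (charPoly A) = lowCoeffs n (charPoly B)) : charPoly A = charPoly B :=
  (charPoly_monic A).eq_of_lowCoeffs_eq (charPoly_monic B) (by rw [natDegree_charPoly, hA])
    (by rw [natDegree_charPoly, hB]) h

lemma degree_charPoly_sub_lt_of_highCoeffs_eq {A₁ A₂ : Finset F} {k t : ℕ} (h₁ : #A₁ = t)
    (h₂ : #A₂ = t) (h : highCoeffs k t (charPoly A₁) = highCoeffs k t (charPoly A₂)) :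
    (charPoly A₁ - charPoly A₂).degree < k := by
  refine (degree_lt_iff_coeff_zero _ _).mpr fun i hi => ?_
  rw [coeff_sub, sub_eq_zero]
  rcases lt_or_ge i t with hit | hti
  · obtain ⟨j, rfl⟩ := Nat.exists_eq_add_of_le hi
    exact congrFun h ⟨j, by omega⟩
  · rw [coeff_charPoly_of_card_le _ (h₁ ▸ hti), coeff_charPoly_of_card_le _ (h₂ ▸ hti), h₁, h₂]

variable [DecidableEq F]

lemma charPoly_mul_charPoly_sdiff (A B : Finset F) :
    charPoly B * charPoly (A \ B) = charPoly A * charPoly (B \ A) := by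
  simp only [charPoly]
  rw [← prod_union disjoint_sdiff, ← prod_union disjoint_sdiff,
    union_sdiff_self_eq_union, union_sdiff_self_eq_union, union_comm]

lemma degree_charPoly_sub_lt {A₁ B₁ A₂ B₂ : Finset F} {k : ℕ} (hBA : #B₁ ≤ #A₁)
    (hA : (charPoly A₁ - charPoly A₂).degree < k)
    (hp : charPoly (A₁ \ B₁) = charPoly (A₂ \ B₂))
    (hr : charPoly (B₁ \ A₁) = charPoly (B₂ \ A₂)) :
    (charPoly B₁ - charPoly B₂).degree < k := by
  refine degree_lt_of_mul_eq_mul (p := charPoly (A₁ \ B₁)) (r := charPoly (B₁ \ A₁))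
    (charPoly_monic _).ne_zero ?_ ?_ hA
  · rw [natDegree_charPoly, natDegree_charPoly]
    exact card_sdiff_le_card_sdiff_iff.mpr hBA
  · rw [sub_mul, sub_mul, charPoly_mul_charPoly_sdiff A₁ B₁, hp, hr,
      charPoly_mul_charPoly_sdiff A₂ B₂]

end CharPoly

theorem stmt4_general {F : Type*} [Field F] [Fintype F] [DecidableEq F]
    (k s t d : ℕ) (hst : s ≤ t)
    (a : Fin (t - k) → F) :
    Set.ncard { b : Fin (s - k) → F | ∃ A B : Finset F,
        A.card = t ∧ B.card = s ∧ (symmDiff A B).card = d ∧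
        (∀ j : Fin (t - k), (charPoly A).coeff (k + (j : ℕ)) = a j) ∧
        (∀ j : Fin (s - k), (charPoly B).coeff (k + (j : ℕ)) = b j) }
      ≤ (Fintype.card F) ^ d := by
  set W : Set (Finset F × Finset F) := { AB | #AB.1 = t ∧ #AB.2 = s ∧
    #(symmDiff AB.1 AB.2) = d ∧ highCoeffs k t (charPoly AB.1) = a }
  set m := (d + t - s) / 2
  have hcards : ∀ AB ∈ W, #(AB.1 \ AB.2) = m ∧ #(AB.2 \ AB.1) = d - m := by
    rintro AB ⟨hA, hB, hd, -⟩
    have := card_symmDiff AB.1 AB.2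
    have := card_sdiff_eq_div_two AB.1 AB.2
    omega
  refine (Set.ncard_le_ncard (t := (fun AB => highCoeffs k s (charPoly AB.2)) '' W) ?_
    (Set.toFinite _)).trans ?_
  · rintro b ⟨A, B, hA, hB, hd, ha, hb⟩
    exact ⟨(A, B), ⟨hA, hB, hd, funext ha⟩, funext hb⟩
  rcases W.eq_empty_or_nonempty with hW | ⟨AB₀, hAB₀⟩
  · simp [hW]
  have hm : m ≤ d := by
    have := card_symmDiff AB₀.1 AB₀.2
    have := hcards AB₀ hAB₀
    have := hAB₀.2.2.1
    omega
  let key (AB : Finset F × Finset F) :=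
    (lowCoeffs m (charPoly (AB.1 \ AB.2)), lowCoeffs (d - m) (charPoly (AB.2 \ AB.1)))
  have hfactor : ∀ AB₁ ∈ W, ∀ AB₂ ∈ W, key AB₁ = key AB₂ →
      highCoeffs k s (charPoly AB₁.2) = highCoeffs k s (charPoly AB₂.2) := by
    rintro AB₁ h₁ AB₂ h₂ hkey
    obtain ⟨hp₁, hr₁⟩ := hcards _ h₁
    obtain ⟨hp₂, hr₂⟩ := hcards _ h₂
    obtain ⟨hA₁, hB₁, -, ha₁⟩ := h₁
    obtain ⟨hA₂, -, -, ha₂⟩ := h₂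
    obtain ⟨hu, hv⟩ := Prod.mk.inj hkey
    exact highCoeffs_eq_of_degree_sub_lt s <| degree_charPoly_sub_lt (by omega)
      (degree_charPoly_sub_lt_of_highCoeffs_eq hA₁ hA₂ (ha₁.trans ha₂.symm))
      (charPoly_eq_of_lowCoeffs_eq hp₁ hp₂ hu) (charPoly_eq_of_lowCoeffs_eq hr₁ hr₂ hv)
  calc _ ≤ Fintype.card ((Fin m → F) × (Fin (d - m) → F)) :=
        Set.ncard_image_le_card_of_factor _ key hfactor
    _ = Fintype.card F ^ d := by
      rw [Fintype.card_prod, Fintype.card_fun, Fintype.card_fun, Fintype.card_fin,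
        Fintype.card_fin, ← pow_add, Nat.add_sub_cancel' hm]

/-- Lemma 5 of the paper: for a fixed deterministic vault record
`(a_k, …, a_{t−1})`, the number of deterministic vault records
`(b_k, …, b_{s−1})` arising from feature sets `B` of size `s` at symmetric
difference `d` from some feature set `A` of size `t` with record
`(a_k, …, a_{t−1})` is at most `q^d`. -/
theorem stmt4 {F : Type*} [Field F] [Fintype F] [DecidableEq F]
    (k s t d : ℕ) (hk : 1 ≤ k) (hks : k ≤ s) (hst : s ≤ t) (hd : d ≤ s + t)
    (a : Fin (t - k) → F) :
    Set.ncard { b : Fin (s - k) → F | ∃ A B : Finset F,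
        A.card = t ∧ B.card = s ∧ (symmDiff A B).card = d ∧
        (∀ j : Fin (t - k), (charPoly A).coeff (k + (j : ℕ)) = a j) ∧
        (∀ j : Fin (s - k), (charPoly B).coeff (k + (j : ℕ)) = b j) }
      ≤ (Fintype.card F) ^ d :=
  stmt4_general k s t d hst a
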